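/- Let P = (P_1,…,P_{t_1}) and Q = (Q_1,…,Q_{t_2}) with t_1, t_2 ≥ 1, m_1 = max_i deg P_i, m_2 = max_i deg Q_i, m_1 ≥ m_2, t_1 + t_2 ≤ m_1 + 1. If m_2 = m_1 − t_1 + 1, then dp(P_1,…,P_{t_1},Q_1,…,Q_{t_2}) = dp(dp(P), Q_1, …, Q_{t_2}). -/

import Mathlib

open Polynomial

noncomputable section

variable {R : Type*} [CommRing R]

/-- Column selection for the determinant polynomial: the first `t - 1` columns of a
`t × q` matrix, and then (for the `j`-th coefficient) the column `q - j` (1-indexed),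
i.e. column `q - 1 - j` (0-indexed). -/
def colSel (t q j : ℕ) (k : Fin t) : ℕ :=
  if (k : ℕ) + 1 < t then (k : ℕ) else q - 1 - j

/-- Determinant polynomial of the coefficient matrix of the list of polynomials `L`,
where the coefficient matrix has `q` columns: its `(i,k)` entry (0-indexed) is the
coefficient of `x^(q-1-k)` in `L.get i`.  So
`dpListQ L q = ∑_{j=0}^{q - t} det [M_1 ⋯ M_{t-1} M_{q-j}] • x^j` with `t = L.length`. -/
noncomputable def dpListQ (L : List (Polynomial R)) (q : ℕ) : Polynomial R :=
  ∑ j ∈ Finset.range (q + 1 - L.length),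
    Polynomial.C (Matrix.det (Matrix.of fun i k : Fin L.length =>
      (L.get i).coeff (q - 1 - colSel L.length q j k))) * Polynomial.X ^ j

/-- The maximum of the degrees of the polynomials in `L`. -/
def maxDeg (L : List (Polynomial R)) : ℕ := (L.map Polynomial.natDegree).foldr max 0

/-- `dp(P) = dp(cm(P))`: the coefficient matrix `cm(P)` has `m + 1` columns where
`m` is the maximal degree. -/
noncomputable def dpList (L : List (Polynomial R)) : Polynomial R :=
  dpListQ L (maxDeg L + 1)

/-- `pcdp(P)`: the coefficient of `x^(q - p)` in `dp(P)` (`p` rows, `q` columns). -/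
noncomputable def pcdpList (L : List (Polynomial R)) : R :=
  (dpList L).coeff (maxDeg L + 1 - L.length)

/-- The list `x^(m-1) * g, x^(m-2) * g, …, x^0 * g`. -/
noncomputable def shifts (g : Polynomial R) (m : ℕ) : List (Polynomial R) :=
  (List.range m).reverse.map fun s => Polynomial.X ^ s * g

/-- The coefficient ring `ℤ[b, b*]`: polynomials over `ℤ` in independent indeterminates
indexed by a tag (`false` for the `b`'s, `true` for the `b*`'s) and a pair of indices. -/
abbrev Rb : Type := MvPolynomial (Bool × ℕ × ℕ) ℤ

/-- The generic polynomials `P_i = ∑_{j=0}^{p_i} b_{i j} x^j` with independent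
indeterminate coefficients. -/
noncomputable def genPoly (b : Bool) (t : ℕ) (deg : Fin t → ℕ) : List (Polynomial Rb) :=
  List.ofFn fun i : Fin t =>
    ∑ j ∈ Finset.range (deg i + 1),
      Polynomial.C (MvPolynomial.X (b, (i : ℕ), j)) * Polynomial.X ^ j

/-!
Let `P` consist of `s + 1` polynomials and `Q` of `n`. Since `m₁ = m₂ + s` and every `Q_i` has
degree at most `m₂`, the rows of `Q` vanish in the first `s` columns of `cm(P, Q)`, so every matrix
`[M_1 ⋯ M_{t-1} M_{q-j}]` giving a coefficient of `dp(P, Q)` has the shape `[[A, B], [0, C]]`, where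
`[A, B]` are the rows of `P` and `A` has `s` columns. Expanding along the first column and inducting
on `s`, such a determinant equals the one in which the rows `[A, B]` are condensed into the single
row of minors `det [A | b]`, `b` running over the columns of `B`. These minors are the coefficients
of `dp(P)`, so the condensed matrix is the one giving the same coefficient of `dp(dp(P), Q)`.
-/

theorem Fin.val_succAbove_eq_ite {m : ℕ} (i : Fin (m + 1)) (r : Fin m) :
    (i.succAbove r : ℕ) = if (r : ℕ) < i then (r : ℕ) else (r : ℕ) + 1 := by
  rcases lt_or_ge (r : ℕ) i with h | h
  · rw [Fin.succAbove_of_castSucc_lt _ _ h, if_pos h, Fin.val_castSucc]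
  · rw [Fin.succAbove_of_le_castSucc _ _ h, if_neg (not_lt.2 h), Fin.val_succ]

namespace Matrix

def deleteRowColZero {α : Type*} (i : ℕ) (r : ℕ → ℕ → α) : ℕ → ℕ → α :=
  fun a b => r (if a < i then a else a + 1) (b + 1)

def augmented (s : ℕ) (r : ℕ → ℕ → R) (c : ℕ) : Matrix (Fin (s + 1)) (Fin (s + 1)) R :=
  of fun i k => r i (if (k : ℕ) < s then k else c)

def condensed (n s : ℕ) (r : ℕ → ℕ → R) : Matrix (Fin (n + 1)) (Fin (n + 1)) R :=
  of fun i k => if (i : ℕ) = 0 then (augmented s r (s + k)).det else r (i + s) (s + k)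

theorem submatrix_succAbove_succ_of_nat {α : Type*} (N : ℕ) (r : ℕ → ℕ → α)
    (i : Fin (N + 1)) :
    (of fun a b : Fin (N + 1) => r a b).submatrix i.succAbove Fin.succ
      = of fun a b : Fin N => deleteRowColZero i r a b := by
  ext a b
  simp [deleteRowColZero, Fin.val_succAbove_eq_ite]

theorem det_augmented_succ (s : ℕ) (r : ℕ → ℕ → R) (c : ℕ) :
    (augmented (s + 1) r (c + 1)).det
      = ∑ i ∈ Finset.range (s + 2),
          (-1) ^ i * r i 0 * (augmented s (deleteRowColZero i r) c).det := by
  rw [det_succ_column_zero, ← Fin.sum_univ_eq_sum_range]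
  refine Finset.sum_congr rfl fun i _ => ?_
  have hminor : (augmented (s + 1) r (c + 1)).submatrix i.succAbove Fin.succ
      = augmented s (deleteRowColZero i r) c := by
    ext a b
    simp only [augmented, deleteRowColZero, submatrix_apply, of_apply, Fin.val_succ,
      Fin.val_succAbove_eq_ite]
    congr 1
    split_ifs <;> omega
  rw [hminor]
  simp [augmented]

theorem condensed_submatrix_succ_succAbove (n s : ℕ) (r : ℕ → ℕ → R) {i : ℕ}
    (hi : i ≤ s + 1) (k : Fin (n + 1)) :
    (condensed n (s + 1) r).submatrix Fin.succ k.succAbove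
      = (condensed n s (deleteRowColZero i r)).submatrix Fin.succ k.succAbove := by
  ext a b
  simp only [condensed, deleteRowColZero, submatrix_apply, of_apply, Fin.val_succ]
  rw [if_neg (by omega), if_neg (by omega), if_neg (by omega)]
  congr 1
  omega

theorem det_condensed_succ (n s : ℕ) (r : ℕ → ℕ → R) :
    (condensed n (s + 1) r).det
      = ∑ i ∈ Finset.range (s + 2),
          (-1) ^ i * r i 0 * (condensed n s (deleteRowColZero i r)).det := by
  -- Expand along row 0: the minors of that row are the same for all the matrices involved, and
  -- row 0 of the left side is the combination, given by `det_augmented_succ`, of the rows 0 on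
  -- the right.
  rw [det_succ_row_zero]
  simp_rw [det_succ_row_zero (condensed n s _), Finset.mul_sum]
  rw [Finset.sum_comm]
  refine Finset.sum_congr rfl fun k _ => ?_
  have hrow : condensed n (s + 1) r 0 k = (augmented (s + 1) r (s + k + 1)).det := by
    simp [condensed, add_right_comm]
  rw [hrow, det_augmented_succ, Finset.mul_sum, Finset.sum_mul]
  refine Finset.sum_congr rfl fun i hi => ?_
  rw [condensed_submatrix_succ_succAbove n s r (by simpa [Nat.lt_succ_iff] using hi) k]
  simp only [condensed, of_apply, Fin.val_zero, if_true]
  ring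

theorem det_of_nat_eq_det_condensed (n s : ℕ) (r : ℕ → ℕ → R)
    (hr : ∀ i k, s < i → k < s → r i k = 0) :
    (of fun i k : Fin (n + s + 1) => r i k).det = (condensed n s r).det := by
  induction s generalizing r with
  | zero =>
    congr 1
    ext i k
    simp only [condensed, augmented, of_apply]
    split_ifs with hi
    · simp [hi]
    · simp
  | succ s ih =>
    set f : ℕ → R := fun i => (-1) ^ i * r i 0 * (condensed n s (deleteRowColZero i r)).det
    have hf : ∀ i, s + 1 < i → f i = 0 := fun i hi => by simp [f, hr i 0 hi (by omega)]
    have hterm : ∀ i : Fin (n + (s + 1) + 1), (-1) ^ (i : ℕ) * r i 0 *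
        ((of fun a b : Fin (n + (s + 1) + 1) => r a b).submatrix i.succAbove Fin.succ).det
          = f i := by
      intro i
      by_cases hi : (i : ℕ) ≤ s + 1
      · have hdet := ih (deleteRowColZero i r) fun a k ha hk => by
          simp only [deleteRowColZero]
          exact hr _ _ (by split_ifs <;> omega) (by omega)
        rw [submatrix_succAbove_succ_of_nat]
        exact congrArg ((-1) ^ (i : ℕ) * r i 0 * ·) hdet
      · rw [hf i (by omega), hr i 0 (by omega) (by omega), mul_zero, zero_mul]
    rw [det_succ_column_zero]
    simp only [of_apply, Fin.val_zero]
    rw [Finset.sum_congr rfl fun i _ => hterm i, Fin.sum_univ_eq_sum_range f,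
      det_condensed_succ]
    exact (Finset.sum_subset (Finset.range_subset_range.2 (by omega))
      fun i _ hi => hf i (by simp at hi; omega)).symm

theorem det_of_nat_congr {a b : ℕ} (h : a = b) (f : ℕ → ℕ → R) :
    (of fun i k : Fin a => f i k).det = (of fun i k : Fin b => f i k).det := by
  subst h
  rfl

end Matrix

theorem maxDeg_cons (a : R[X]) (L : List R[X]) : maxDeg (a :: L) = max a.natDegree (maxDeg L) :=
  rfl

theorem maxDeg_append (L₁ L₂ : List R[X]) :
    maxDeg (L₁ ++ L₂) = max (maxDeg L₁) (maxDeg L₂) := by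
  induction L₁ with
  | nil => exact (max_eq_right (Nat.zero_le _)).symm
  | cons a L ih => rw [List.cons_append, maxDeg_cons, maxDeg_cons, ih, max_assoc]

theorem natDegree_getD_le_maxDeg (L : List R[X]) (i : ℕ) :
    (L.getD i 0).natDegree ≤ maxDeg L := by
  induction L generalizing i with
  | nil => simp
  | cons a L ih =>
    rw [maxDeg_cons]
    cases i with
    | zero => exact le_max_left _ _
    | succ i => exact (ih i).trans (le_max_right _ _)

/-- The entries of `cm(L)` (0-indexed) when `m = maxDeg L`. -/
def coeffRows (L : List R[X]) (m i k : ℕ) : R :=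
  (L.getD i 0).coeff (m - k)

theorem natDegree_dpListQ_le (L : List R[X]) (q : ℕ) : (dpListQ L q).natDegree ≤ q - L.length :=
  natDegree_sum_le_of_forall_le _ _ fun j hj =>
    (natDegree_C_mul_X_pow_le _ _).trans (by have := Finset.mem_range.1 hj; omega)

theorem dpListQ_eq_sum_det_augmented (L : List R[X]) {s : ℕ} (hL : L.length = s + 1) (q : ℕ) :
    dpListQ L q = ∑ j ∈ Finset.range (q - s),
      C (Matrix.augmented s (coeffRows L (q - 1)) (q - 1 - j)).det * X ^ j := by
  refine Finset.sum_congr (by rw [hL, Nat.add_sub_add_right]) fun j _ => ?_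
  congr 2
  refine Eq.trans ?_
    (Matrix.det_of_nat_congr hL fun i k => coeffRows L (q - 1) i (if k < s then k else q - 1 - j))
  congr 1
  ext i k
  rw [Matrix.of_apply, Matrix.of_apply, List.get_eq_getElem, ← List.getD_eq_getElem _ 0, colSel,
    coeffRows]
  congr 2
  split_ifs <;> omega

theorem coeff_dpList_eq_det_augmented (L : List R[X]) {s : ℕ} (hL : L.length = s + 1) {d : ℕ}
    (hd : d + s ≤ maxDeg L) :
    (dpList L).coeff d = (Matrix.augmented s (coeffRows L (maxDeg L)) (maxDeg L - d)).det := by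
  rw [dpList, dpListQ_eq_sum_det_augmented L hL, finsetSum_coeff]
  simp only [coeff_C_mul_X_pow, Nat.add_sub_cancel]
  rw [Finset.sum_ite_eq (Finset.range _) d, if_pos (Finset.mem_range.2 (by omega))]

theorem det_augmented_append_eq (L₁ L₂ : List R[X]) {s : ℕ} (hL₁ : L₁.length = s + 1)
    (hdeg : maxDeg L₁ = maxDeg L₂ + s) {j : ℕ} (hj : j + L₂.length ≤ maxDeg L₂) :
    (Matrix.augmented (L₂.length + s) (coeffRows (L₁ ++ L₂) (maxDeg L₁))
        (maxDeg L₁ - j)).det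
      = (Matrix.augmented L₂.length (coeffRows (dpList L₁ :: L₂) (maxDeg L₂))
          (maxDeg L₂ - j)).det := by
  set n := L₂.length
  set r : ℕ → ℕ → R := fun i k =>
    coeffRows (L₁ ++ L₂) (maxDeg L₁) i (if k < n + s then k else maxDeg L₁ - j)
  have hlow : ∀ i k, s < i → k < s → r i k = 0 := by
    intro i k hi hk
    simp only [r, if_pos (by omega : k < n + s), coeffRows,
      List.getD_append_right _ _ _ _ (by omega : L₁.length ≤ i)]
    exact coeff_eq_zero_of_natDegree_lt ((natDegree_getD_le_maxDeg L₂ _).trans_lt (by omega))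
  refine (Matrix.det_of_nat_eq_det_condensed n s r hlow).trans (congrArg _ ?_)
  ext i k
  simp only [Matrix.condensed, Matrix.augmented, Matrix.of_apply]
  obtain ⟨i, hi⟩ := i
  have hk := k.isLt
  cases i with
  | zero =>
    rw [if_pos rfl, coeffRows, List.getD_cons_zero,
      coeff_dpList_eq_det_augmented L₁ hL₁ (by split_ifs <;> omega)]
    congr 1
    ext a b
    simp only [Matrix.augmented, Matrix.of_apply, r, coeffRows,
      List.getD_append _ _ _ _ (by omega : (a : ℕ) < L₁.length)]
    congr 2
    split_ifs <;> omega
  | succ i =>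
    simp only [r, coeffRows, List.getD_cons_succ, if_neg (Nat.succ_ne_zero i),
      List.getD_append_right _ _ _ _ (by omega : L₁.length ≤ i + 1 + s)]
    rw [show i + 1 + s - L₁.length = i by omega]
    congr 1
    split_ifs <;> omega

theorem dpList_append_eq_dpList_cons_dpList (L₁ L₂ : List R[X])
    (hm : maxDeg L₂ ≤ maxDeg L₁) (hcase : maxDeg L₂ + L₁.length = maxDeg L₁ + 1) :
    dpList (L₁ ++ L₂) = dpList (dpList L₁ :: L₂) := by
  obtain ⟨s, hs⟩ : ∃ s, L₁.length = s + 1 := ⟨L₁.length - 1, by omega⟩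
  have hdeg : maxDeg L₁ = maxDeg L₂ + s := by omega
  have hmax_append : maxDeg (L₁ ++ L₂) = maxDeg L₁ := by
    rw [maxDeg_append]
    omega
  have hmax_cons : maxDeg (dpList L₁ :: L₂) = maxDeg L₂ := by
    have := natDegree_dpListQ_le L₁ (maxDeg L₁ + 1)
    rw [maxDeg_cons, dpList]
    omega
  show dpListQ _ (maxDeg (L₁ ++ L₂) + 1) = dpListQ _ (maxDeg (dpList L₁ :: L₂) + 1)
  rw [hmax_append, hmax_cons,
    dpListQ_eq_sum_det_augmented (L₁ ++ L₂) (s := L₂.length + s) (by simp [hs]; omega),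
    dpListQ_eq_sum_det_augmented (dpList L₁ :: L₂) (s := L₂.length) rfl]
  refine Finset.sum_congr (by congr 1; omega) fun j hj => ?_
  simp only [Nat.add_sub_cancel]
  rw [det_augmented_append_eq L₁ L₂ hs hdeg (by simp at hj; omega)]

theorem length_genPoly (b : Bool) (t : ℕ) (deg : Fin t → ℕ) : (genPoly b t deg).length = t :=
  List.length_ofFn

theorem dp_append_case_nested_general (t1 t2 : ℕ)
    (p : Fin t1 → ℕ) (q : Fin t2 → ℕ)
    (hm : maxDeg (genPoly true t2 q) ≤ maxDeg (genPoly false t1 p))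
    (hcase : maxDeg (genPoly true t2 q) + t1 = maxDeg (genPoly false t1 p) + 1) :
    dpList (genPoly false t1 p ++ genPoly true t2 q)
      = dpList (dpList (genPoly false t1 p) :: genPoly true t2 q) :=
  dpList_append_eq_dpList_cons_dpList _ _ hm (by rwa [length_genPoly])

/-- Case (1) of Lemma on determinant polynomials: if `m₂ = m₁ - t₁ + 1` then
`dp(P, Q) = dp(dp(P), Q)`. -/
theorem dp_append_case_nested (t1 t2 : ℕ) (ht1 : 1 ≤ t1) (ht2 : 1 ≤ t2)
    (p : Fin t1 → ℕ) (q : Fin t2 → ℕ)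
    (hm : maxDeg (genPoly true t2 q) ≤ maxDeg (genPoly false t1 p))
    (ht : t1 + t2 ≤ maxDeg (genPoly false t1 p) + 1)
    (hcase : maxDeg (genPoly true t2 q) + t1 = maxDeg (genPoly false t1 p) + 1) :
    dpList (genPoly false t1 p ++ genPoly true t2 q)
      = dpList (dpList (genPoly false t1 p) :: genPoly true t2 q) :=
  dp_append_case_nested_general t1 t2 p q hm hcase
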